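/- A finite chain of strong arbitrages is a stabilizer (i.e., maps every ensemble of positive rates to a balanced ensemble) if and only if the product of the corresponding matrices G_{k₁}⋯G_{k_N} equals the zero matrix. -/
import Mathlib

noncomputable def strongArb : Fin 12 → (Fin 6 → ℝ) → (Fin 6 → ℝ) :=
  ![fun R => Function.update R 0 (R 1 / R 3),   -- FAR
    fun R => Function.update R 0 (R 2 / R 4),   -- FAM
    fun R => Function.update R 1 (R 0 * R 3),   -- FRA
    fun R => Function.update R 1 (R 2 / R 5),   -- FRM
    fun R => Function.update R 2 (R 0 * R 4),   -- FMA
    fun R => Function.update R 2 (R 1 * R 5),   -- FMR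
    fun R => Function.update R 3 (R 1 / R 0),   -- ARF
    fun R => Function.update R 3 (R 4 / R 5),   -- ARM
    fun R => Function.update R 4 (R 2 / R 0),   -- AMF
    fun R => Function.update R 4 (R 3 * R 5),   -- AMR
    fun R => Function.update R 5 (R 2 / R 1),   -- RMF
    fun R => Function.update R 5 (R 4 / R 3)]   -- RMA

def G : Fin 12 → Matrix (Fin 3) (Fin 3) ℝ :=
  ![!![0,0,-1; 0,1,0; 0,0,1],
    !![1,0,0; 1,1,1; -1,0,0],
    !![0,0,0; 0,1,0; 0,0,1],
    !![0,0,0; 0,1,0; 1,0,1],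
    !![1,0,0; 0,1,1; 0,0,0],
    !![1,0,1; 0,1,0; 0,0,0],
    !![0,-1,-1; 0,1,0; 0,0,1],
    !![1,0,0; -1,0,-1; 0,0,1],
    !![1,0,0; 0,0,0; 0,1,1],
    !![1,0,0; 0,0,0; 0,0,1],
    !![1,1,1; 0,1,0; 0,-1,0],
    !![1,0,0; 0,0,-1; 0,0,1]]

def IsBalanced (R : Fin 6 → ℝ) : Prop :=
  R 0 * R 3 = R 1 ∧ R 3 * R 5 = R 4 ∧ R 0 * R 3 * R 5 = R 2

noncomputable def dvec (R : Fin 6 → ℝ) : Fin 3 → ℝ :=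
  ![Real.log (R 0) + Real.log (R 3) - Real.log (R 1),
    Real.log (R 3) + Real.log (R 5) - Real.log (R 4),
    Real.log (R 0) + Real.log (R 3) + Real.log (R 5) - Real.log (R 2)]

lemma dstep0 (R : Fin 6 → ℝ) (hR : ∀ i, 0 < R i) :
    dvec (Function.update R 0 (R 1 / R 3)) = Matrix.vecMul (dvec R) !![0,0,-1; 0,1,0; 0,0,1] := by
  have h : ∀ i, R i ≠ 0 := fun i => (hR i).ne'
  funext j
  fin_cases j <;>
    simp [dvec, Function.update_apply, Matrix.vecMul, dotProduct,
      Matrix.vecHead, Matrix.vecTail, Fin.sum_univ_three,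
      Real.log_div, Real.log_mul, h] <;>
    ring

lemma dstep1 (R : Fin 6 → ℝ) (hR : ∀ i, 0 < R i) :
    dvec (Function.update R 0 (R 2 / R 4)) = Matrix.vecMul (dvec R) !![1,0,0; 1,1,1; -1,0,0] := by
  have h : ∀ i, R i ≠ 0 := fun i => (hR i).ne'
  funext j
  fin_cases j <;>
    simp [dvec, Function.update_apply, Matrix.vecMul, dotProduct,
      Matrix.vecHead, Matrix.vecTail, Fin.sum_univ_three,
      Real.log_div, Real.log_mul, h] <;>
    ring

lemma dstep2 (R : Fin 6 → ℝ) (hR : ∀ i, 0 < R i) :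
    dvec (Function.update R 1 (R 0 * R 3)) = Matrix.vecMul (dvec R) !![0,0,0; 0,1,0; 0,0,1] := by
  have h : ∀ i, R i ≠ 0 := fun i => (hR i).ne'
  funext j
  fin_cases j <;>
    simp [dvec, Function.update_apply, Matrix.vecMul, dotProduct,
      Matrix.vecHead, Matrix.vecTail, Fin.sum_univ_three,
      Real.log_div, Real.log_mul, h] <;>
    ring

lemma dstep3 (R : Fin 6 → ℝ) (hR : ∀ i, 0 < R i) :
    dvec (Function.update R 1 (R 2 / R 5)) = Matrix.vecMul (dvec R) !![0,0,0; 0,1,0; 1,0,1] := by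
  have h : ∀ i, R i ≠ 0 := fun i => (hR i).ne'
  funext j
  fin_cases j <;>
    simp [dvec, Function.update_apply, Matrix.vecMul, dotProduct,
      Matrix.vecHead, Matrix.vecTail, Fin.sum_univ_three,
      Real.log_div, Real.log_mul, h] <;>
    ring

lemma dstep4 (R : Fin 6 → ℝ) (hR : ∀ i, 0 < R i) :
    dvec (Function.update R 2 (R 0 * R 4)) = Matrix.vecMul (dvec R) !![1,0,0; 0,1,1; 0,0,0] := by
  have h : ∀ i, R i ≠ 0 := fun i => (hR i).ne'
  funext j
  fin_cases j <;>
    simp [dvec, Function.update_apply, Matrix.vecMul, dotProduct,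
      Matrix.vecHead, Matrix.vecTail, Fin.sum_univ_three,
      Real.log_div, Real.log_mul, h] <;>
    ring

lemma dstep5 (R : Fin 6 → ℝ) (hR : ∀ i, 0 < R i) :
    dvec (Function.update R 2 (R 1 * R 5)) = Matrix.vecMul (dvec R) !![1,0,1; 0,1,0; 0,0,0] := by
  have h : ∀ i, R i ≠ 0 := fun i => (hR i).ne'
  funext j
  fin_cases j <;>
    simp [dvec, Function.update_apply, Matrix.vecMul, dotProduct,
      Matrix.vecHead, Matrix.vecTail, Fin.sum_univ_three,
      Real.log_div, Real.log_mul, h] <;>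
    ring

lemma dstep6 (R : Fin 6 → ℝ) (hR : ∀ i, 0 < R i) :
    dvec (Function.update R 3 (R 1 / R 0)) = Matrix.vecMul (dvec R) !![0,-1,-1; 0,1,0; 0,0,1] := by
  have h : ∀ i, R i ≠ 0 := fun i => (hR i).ne'
  funext j
  fin_cases j <;>
    simp [dvec, Function.update_apply, Matrix.vecMul, dotProduct,
      Matrix.vecHead, Matrix.vecTail, Fin.sum_univ_three,
      Real.log_div, Real.log_mul, h] <;>
    ring

lemma dstep7 (R : Fin 6 → ℝ) (hR : ∀ i, 0 < R i) :
    dvec (Function.update R 3 (R 4 / R 5)) = Matrix.vecMul (dvec R) !![1,0,0; -1,0,-1; 0,0,1] := by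
  have h : ∀ i, R i ≠ 0 := fun i => (hR i).ne'
  funext j
  fin_cases j <;>
    simp [dvec, Function.update_apply, Matrix.vecMul, dotProduct,
      Matrix.vecHead, Matrix.vecTail, Fin.sum_univ_three,
      Real.log_div, Real.log_mul, h] <;>
    ring

lemma dstep8 (R : Fin 6 → ℝ) (hR : ∀ i, 0 < R i) :
    dvec (Function.update R 4 (R 2 / R 0)) = Matrix.vecMul (dvec R) !![1,0,0; 0,0,0; 0,1,1] := by
  have h : ∀ i, R i ≠ 0 := fun i => (hR i).ne'
  funext j
  fin_cases j <;>
    simp [dvec, Function.update_apply, Matrix.vecMul, dotProduct,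
      Matrix.vecHead, Matrix.vecTail, Fin.sum_univ_three,
      Real.log_div, Real.log_mul, h] <;>
    ring

lemma dstep9 (R : Fin 6 → ℝ) (hR : ∀ i, 0 < R i) :
    dvec (Function.update R 4 (R 3 * R 5)) = Matrix.vecMul (dvec R) !![1,0,0; 0,0,0; 0,0,1] := by
  have h : ∀ i, R i ≠ 0 := fun i => (hR i).ne'
  funext j
  fin_cases j <;>
    simp [dvec, Function.update_apply, Matrix.vecMul, dotProduct,
      Matrix.vecHead, Matrix.vecTail, Fin.sum_univ_three,
      Real.log_div, Real.log_mul, h] <;>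
    ring

lemma dstep10 (R : Fin 6 → ℝ) (hR : ∀ i, 0 < R i) :
    dvec (Function.update R 5 (R 2 / R 1)) = Matrix.vecMul (dvec R) !![1,1,1; 0,1,0; 0,-1,0] := by
  have h : ∀ i, R i ≠ 0 := fun i => (hR i).ne'
  funext j
  fin_cases j <;>
    simp [dvec, Function.update_apply, Matrix.vecMul, dotProduct,
      Matrix.vecHead, Matrix.vecTail, Fin.sum_univ_three,
      Real.log_div, Real.log_mul, h] <;>
    ring

lemma dstep11 (R : Fin 6 → ℝ) (hR : ∀ i, 0 < R i) :
    dvec (Function.update R 5 (R 4 / R 3)) = Matrix.vecMul (dvec R) !![1,0,0; 0,0,-1; 0,0,1] := by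
  have h : ∀ i, R i ≠ 0 := fun i => (hR i).ne'
  funext j
  fin_cases j <;>
    simp [dvec, Function.update_apply, Matrix.vecMul, dotProduct,
      Matrix.vecHead, Matrix.vecTail, Fin.sum_univ_three,
      Real.log_div, Real.log_mul, h] <;>
    ring
lemma update_pos {R : Fin 6 → ℝ} (hR : ∀ i, 0 < R i) {j : Fin 6} {v : ℝ}
    (hv : 0 < v) : ∀ i, 0 < Function.update R j v i := by
  intro i
  rcases eq_or_ne i j with rfl | h
  · simpa using hv
  · rw [Function.update_of_ne h]; exact hR i

lemma pos_step (k : Fin 12) (R : Fin 6 → ℝ) (hR : ∀ i, 0 < R i) :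
    ∀ i, 0 < strongArb k R i := by
  fin_cases k <;>
    exact update_pos hR (by first
      | exact div_pos (hR _) (hR _)
      | exact mul_pos (hR _) (hR _))

lemma dvec_step (k : Fin 12) (R : Fin 6 → ℝ) (hR : ∀ i, 0 < R i) :
    dvec (strongArb k R) = Matrix.vecMul (dvec R) (G k) := by
  fin_cases k
  exacts [dstep0 R hR, dstep1 R hR, dstep2 R hR, dstep3 R hR, dstep4 R hR,
    dstep5 R hR, dstep6 R hR, dstep7 R hR, dstep8 R hR, dstep9 R hR,
    dstep10 R hR, dstep11 R hR]

lemma dvec_foldl (L : List (Fin 12)) (R : Fin 6 → ℝ) (hR : ∀ i, 0 < R i) :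
    (∀ i, 0 < (L.foldl (fun acc k => strongArb k acc) R) i) ∧
      dvec (L.foldl (fun acc k => strongArb k acc) R) =
        Matrix.vecMul (dvec R) (L.map G).prod := by
  induction L generalizing R with
  | nil =>
    refine ⟨hR, ?_⟩
    simp [Matrix.vecMul_one]
  | cons a L ih =>
    obtain ⟨h1, h2⟩ := ih (strongArb a R) (pos_step a R hR)
    refine ⟨h1, ?_⟩
    simp only [List.foldl_cons, List.map_cons, List.prod_cons] at *
    rw [h2, dvec_step a R hR, Matrix.vecMul_vecMul]

lemma log_eq_iff {a b : ℝ} (ha : 0 < a) (hb : 0 < b) :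
    Real.log a = Real.log b ↔ a = b :=
  ⟨fun h => by rw [← Real.exp_log ha, h, Real.exp_log hb], fun h => h ▸ rfl⟩

lemma balanced_iff_dvec {R : Fin 6 → ℝ} (hR : ∀ i, 0 < R i) :
    IsBalanced R ↔ dvec R = 0 := by
  have h : ∀ i, R i ≠ 0 := fun i => (hR i).ne'
  have h03 : R 0 * R 3 ≠ 0 := mul_ne_zero (h 0) (h 3)
  constructor
  · rintro ⟨h1, h2, h3⟩
    funext j
    fin_cases j <;>
      · simp only [dvec, ← h1, ← h2, ← h3, Real.log_mul, h, h03, ne_eq,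
          not_false_eq_true, Matrix.cons_val_zero, Matrix.cons_val_one,
          Matrix.head_cons, Matrix.cons_val_two, Matrix.vecTail, Matrix.vecHead,
          Function.comp_apply, Fin.succ_zero_eq_one, Pi.zero_apply]
        try ring
        try simp [Matrix.cons_val_zero', Matrix.cons_val_succ']
  · intro hd
    have e0 : dvec R 0 = 0 := congrFun hd 0
    have e1 : dvec R 1 = 0 := congrFun hd 1
    have e2 : dvec R 2 = 0 := congrFun hd 2
    simp only [dvec, Matrix.cons_val_zero, Matrix.cons_val_one, Matrix.head_cons,
      Matrix.cons_val_two, Matrix.vecTail, Matrix.vecHead, Function.comp_apply,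
      Fin.succ_zero_eq_one, sub_eq_zero] at e0 e1 e2
    refine ⟨?_, ?_, ?_⟩
    · rw [← log_eq_iff (mul_pos (hR 0) (hR 3)) (hR 1), Real.log_mul (h 0) (h 3)]
      exact e0
    · rw [← log_eq_iff (mul_pos (hR 3) (hR 5)) (hR 4), Real.log_mul (h 3) (h 5)]
      exact e1
    · rw [← log_eq_iff (mul_pos (mul_pos (hR 0) (hR 3)) (hR 5)) (hR 2),
        Real.log_mul h03 (h 5), Real.log_mul (h 0) (h 3)]
      exact e2

/-- A chain of strong arbitrages is a stabilizer iff the product of the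
corresponding matrices `G` is the zero matrix. -/
theorem stabilizer_iff_G_product_zero (L : List (Fin 12)) :
    (∀ R : Fin 6 → ℝ, (∀ i, 0 < R i) →
      IsBalanced (L.foldl (fun acc k => strongArb k acc) R)) ↔
    (L.map G).prod = 0 := by
  constructor
  · intro hst
    have key : ∀ v : Fin 3 → ℝ, Matrix.vecMul v (L.map G).prod = 0 := by
      intro v
      set R : Fin 6 → ℝ := fun i =>
        if i = 1 then Real.exp (-v 0) else if i = 2 then Real.exp (-v 2)
        else if i = 4 then Real.exp (-v 1) else 1 with hRdef
      have hR : ∀ i, 0 < R i := by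
        intro i
        rw [hRdef]
        dsimp only
        split
        · positivity
        split
        · positivity
        split
        · positivity
        · norm_num
      have hdv : dvec R = v := by
        funext j
        fin_cases j <;>
          simp [dvec, hRdef, Real.log_exp]
      obtain ⟨hpos, hfold⟩ := dvec_foldl L R hR
      have hb := (balanced_iff_dvec hpos).mp (hst R hR)
      rw [hfold, hdv] at hb
      exact hb
    ext i j
    have := congrFun (key (Pi.single i 1)) j
    simpa [Matrix.vecMul, dotProduct, Pi.single_apply, Finset.sum_ite_eq] using this
  · intro hP R hR
    obtain ⟨hpos, hfold⟩ := dvec_foldl L R hR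
    rw [balanced_iff_dvec hpos, hfold, hP, Matrix.vecMul_zero]
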